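/- The map φ : M₂(ℂ) → M₂(ℂ) defined by φ(A) = (1/3)·[[2a₁₁ + a₂₂, a₁₂ + a₂₁],[a₁₂ + a₂₁, a₁₁ + 2a₂₂]] is unital, completely positive, and has rank 3, but is not q-positive. -/

import Mathlib

open Matrix Filter
open scoped Matrix.Norms.L2Operator ComplexOrder

noncomputable section

def IsCompletelyPositive {n : Type*} [Fintype n] [DecidableEq n]
    (φ : Matrix n n ℂ →ₗ[ℂ] Matrix n n ℂ) : Prop :=
  ∀ (k : ℕ) (A : Matrix (Fin k × n) (Fin k × n) ℂ), A.PosSemidef →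
    Matrix.PosSemidef (Matrix.of fun p q : Fin k × n =>
      φ (Matrix.of fun a b => A (p.1, a) (q.1, b)) p.2 q.2)

def Inv2 {n : Type*} [Fintype n] [DecidableEq n]
    (f g : Matrix n n ℂ →ₗ[ℂ] Matrix n n ℂ) : Prop :=
  f ∘ₗ g = LinearMap.id ∧ g ∘ₗ f = LinearMap.id

def QPositive {n : Type*} [Fintype n] [DecidableEq n]
    (φ : Matrix n n ℂ →ₗ[ℂ] Matrix n n ℂ) : Prop :=
  (∀ c : ℝ, c < 0 → ¬ Module.End.HasEigenvalue φ (c : ℂ)) ∧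
  ∀ t : ℝ, 0 ≤ t → ∃ ψ, Inv2 (LinearMap.id + (t : ℂ) • φ) ψ ∧
    IsCompletelyPositive (φ ∘ₗ ψ)

def toC {n : Type*} [Fintype n] [DecidableEq n]
    (φ : Matrix n n ℂ →ₗ[ℂ] Matrix n n ℂ) : Matrix n n ℂ →L[ℂ] Matrix n n ℂ :=
  LinearMap.toContinuousLinearMap φ

def conjMap {n : Type*} [Fintype n] [DecidableEq n]
    (φ : Matrix n n ℂ →ₗ[ℂ] Matrix n n ℂ) (U : Matrix n n ℂ) :
    Matrix n n ℂ →ₗ[ℂ] Matrix n n ℂ where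
  toFun A := Uᴴ * φ (U * A * Uᴴ) * U
  map_add' A B := by simp [Matrix.mul_add, Matrix.add_mul]
  map_smul' c A := by simp [Matrix.mul_smul, Matrix.smul_mul]

/-- Schur (Hadamard) multiplication by a fixed matrix, as a linear map. -/
def schurMap {n : Type*} [Fintype n] [DecidableEq n] (M : Matrix n n ℂ) :
    Matrix n n ℂ →ₗ[ℂ] Matrix n n ℂ where
  toFun A := Matrix.of fun i j => M i j * A i j
  map_add' A B := by ext i j; simp [Matrix.add_apply]; ring
  map_smul' c A := by ext i j; simp [Matrix.smul_apply]; ring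

/-- A state on `Mₙ(ℂ)`. -/
def IsState {n : Type*} [Fintype n] [DecidableEq n]
    (ρ : Matrix n n ℂ →ₗ[ℂ] ℂ) : Prop :=
  ρ 1 = 1 ∧ ∀ A, A.PosSemidef → ∃ r : ℝ, 0 ≤ r ∧ ρ A = (r : ℂ)

def IsProjection {n : Type*} [Fintype n] [DecidableEq n] (P : Matrix n n ℂ) : Prop :=
  P.IsHermitian ∧ P * P = P

/-- φ ≥_q ψ. -/
def QSub {n : Type*} [Fintype n] [DecidableEq n]
    (φ ψ : Matrix n n ℂ →ₗ[ℂ] Matrix n n ℂ) : Prop :=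
  ∀ t : ℝ, 0 ≤ t → ∀ χ₁ χ₂, Inv2 (LinearMap.id + (t : ℂ) • φ) χ₁ →
    Inv2 (LinearMap.id + (t : ℂ) • ψ) χ₂ →
    IsCompletelyPositive (φ ∘ₗ χ₁ - ψ ∘ₗ χ₂)

def QPure {n : Type*} [Fintype n] [DecidableEq n]
    (φ : Matrix n n ℂ →ₗ[ℂ] Matrix n n ℂ) : Prop :=
  QPositive φ ∧ ∀ ψ, QPositive ψ → QSub φ ψ →
    (ψ = 0 ∨ ∃ s : ℝ, 0 ≤ s ∧ ∀ χ, Inv2 (LinearMap.id + (s : ℂ) • φ) χ → ψ = φ ∘ₗ χ)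

/-- The block map `[[A,B],[C,D]] ↦ [[φ(A), σ(B)],[σ*(C), Ψ(D)]]`. -/
def cornerMap {n k : Type*} [Fintype n] [Fintype k] [DecidableEq n] [DecidableEq k]
    (φ : Matrix n n ℂ →ₗ[ℂ] Matrix n n ℂ) (Ψ : Matrix k k ℂ →ₗ[ℂ] Matrix k k ℂ)
    (σ : Matrix n k ℂ →ₗ[ℂ] Matrix n k ℂ) :
    Matrix (n ⊕ k) (n ⊕ k) ℂ →ₗ[ℂ] Matrix (n ⊕ k) (n ⊕ k) ℂ where
  toFun M := Matrix.fromBlocks (φ M.toBlocks₁₁) (σ M.toBlocks₁₂)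
      ((σ (M.toBlocks₂₁)ᴴ)ᴴ) (Ψ M.toBlocks₂₂)
  map_add' M N := by
    have h11 : (M + N).toBlocks₁₁ = M.toBlocks₁₁ + N.toBlocks₁₁ := rfl
    have h12 : (M + N).toBlocks₁₂ = M.toBlocks₁₂ + N.toBlocks₁₂ := rfl
    have h21 : (M + N).toBlocks₂₁ = M.toBlocks₂₁ + N.toBlocks₂₁ := rfl
    have h22 : (M + N).toBlocks₂₂ = M.toBlocks₂₂ + N.toBlocks₂₂ := rfl
    simp only [h11, h12, h21, h22, map_add, conjTranspose_add, Matrix.fromBlocks_add]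
  map_smul' c M := by
    have h11 : (c • M).toBlocks₁₁ = c • M.toBlocks₁₁ := rfl
    have h12 : (c • M).toBlocks₁₂ = c • M.toBlocks₁₂ := rfl
    have h21 : (c • M).toBlocks₂₁ = c • M.toBlocks₂₁ := rfl
    have h22 : (c • M).toBlocks₂₂ = c • M.toBlocks₂₂ := rfl
    simp only [h11, h12, h21, h22, RingHom.id_apply, _root_.map_smul,
      conjTranspose_smul, star_star, Matrix.fromBlocks_smul]

/-- The diagonal-part map on `M₂(ℂ)`. -/
def diagMap : Matrix (Fin 2) (Fin 2) ℂ →ₗ[ℂ] Matrix (Fin 2) (Fin 2) ℂ where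
  toFun A := Matrix.diagonal fun i => A i i
  map_add' A B := by ext i j; by_cases h : i = j <;> simp [Matrix.diagonal, h]
  map_smul' c A := by ext i j; by_cases h : i = j <;> simp [Matrix.diagonal, h]

/-- The explicit rank-3 unital completely positive map of STATEMENT 7. -/
def phi7 : Matrix (Fin 2) (Fin 2) ℂ →ₗ[ℂ] Matrix (Fin 2) (Fin 2) ℂ where
  toFun A := (1 / 3 : ℂ) •
    !![2 * A 0 0 + A 1 1, A 0 1 + A 1 0; A 0 1 + A 1 0, A 0 0 + 2 * A 1 1]
  map_add' A B := by
    ext i j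
    fin_cases i <;> fin_cases j <;> simp [Matrix.add_apply] <;> ring
  map_smul' c A := by
    ext i j
    fin_cases i <;> fin_cases j <;> simp [Matrix.smul_apply] <;> ring


/-! Complete positivity comes from writing `φ = ⅓ (id + Ad S + Ad e₁₁ + Ad e₂₂)`, a positive
combination of conjugations `A ↦ V A Vᴴ`, each of which is completely positive because its
ampliation is conjugation by `1 ⊗ V`. The kernel of `φ` is spanned by the antisymmetric matrix, so
`φ` has rank 3. For `t = 3` the resolvent `ψ = (1 + 3φ)⁻¹` is computed on matrix units by solving
`X + 3 φ X = eᵢⱼ`; the Choi matrix of `φ ∘ ψ` then takes the value `-5/36` at `e₀ ⊗ e₁ - e₁ ⊗ e₀`,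
so `φ ∘ ψ` is not completely positive. -/

open scoped Kronecker

section CompletelyPositive

variable {n : Type*} [Fintype n] [DecidableEq n]

def ampliation (φ : Matrix n n ℂ →ₗ[ℂ] Matrix n n ℂ) {k : ℕ}
    (A : Matrix (Fin k × n) (Fin k × n) ℂ) : Matrix (Fin k × n) (Fin k × n) ℂ :=
  Matrix.of fun p q => φ (Matrix.of fun a b => A (p.1, a) (q.1, b)) p.2 q.2

theorem IsCompletelyPositive.add {φ ψ : Matrix n n ℂ →ₗ[ℂ] Matrix n n ℂ}
    (hφ : IsCompletelyPositive φ) (hψ : IsCompletelyPositive ψ) :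
    IsCompletelyPositive (φ + ψ) :=
  fun k A hA => (hφ k A hA).add (hψ k A hA)

theorem IsCompletelyPositive.smul {φ : Matrix n n ℂ →ₗ[ℂ] Matrix n n ℂ}
    (hφ : IsCompletelyPositive φ) {c : ℂ} (hc : 0 ≤ c) : IsCompletelyPositive (c • φ) :=
  fun k A hA => (hφ k A hA).smul hc

theorem isCompletelyPositive_id : IsCompletelyPositive (LinearMap.id : Matrix n n ℂ →ₗ[ℂ] _) :=
  fun _ _ hA => hA

def conjLinear (V : Matrix n n ℂ) : Matrix n n ℂ →ₗ[ℂ] Matrix n n ℂ :=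
  LinearMap.mulLeft ℂ V ∘ₗ LinearMap.mulRight ℂ Vᴴ

theorem conjLinear_apply (V A : Matrix n n ℂ) : conjLinear V A = V * A * Vᴴ :=
  (Matrix.mul_assoc V A Vᴴ).symm

theorem ampliation_conjLinear (V : Matrix n n ℂ) {k : ℕ}
    (A : Matrix (Fin k × n) (Fin k × n) ℂ) :
    ampliation (conjLinear V) A = (1 ⊗ₖ V) * A * (1 ⊗ₖ V)ᴴ := by
  ext ⟨i, a⟩ ⟨j, b⟩
  simp [ampliation, conjLinear_apply, mul_apply, Fintype.sum_prod_type, one_apply, Finset.sum_mul,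
    apply_ite (starRingEnd ℂ), mul_assoc]

theorem isCompletelyPositive_conjLinear (V : Matrix n n ℂ) :
    IsCompletelyPositive (conjLinear V) := fun k A hA => by
  change (ampliation _ A).PosSemidef
  rw [ampliation_conjLinear]
  exact hA.mul_mul_conjTranspose_same _

def choiMatrix {m : ℕ} (φ : Matrix (Fin m) (Fin m) ℂ →ₗ[ℂ] Matrix (Fin m) (Fin m) ℂ) :
    Matrix (Fin m × Fin m) (Fin m × Fin m) ℂ :=
  Matrix.of fun p q => φ (single p.1 q.1 1) p.2 q.2

theorem choiMatrix_eq_ampliation {m : ℕ}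
    (φ : Matrix (Fin m) (Fin m) ℂ →ₗ[ℂ] Matrix (Fin m) (Fin m) ℂ) :
    choiMatrix φ = ampliation φ (vecMulVec (fun p => if p.1 = p.2 then 1 else 0)
      (star fun p : Fin m × Fin m => if p.1 = p.2 then 1 else 0)) := by
  ext p q
  simp only [choiMatrix, ampliation, of_apply]
  refine congrFun₂ (congrArg φ ?_) _ _
  ext a b
  by_cases ha : p.1 = a <;> by_cases hb : q.1 = b <;> simp [vecMulVec_apply, ha, hb]

theorem IsCompletelyPositive.posSemidef_choiMatrix {m : ℕ}
    {φ : Matrix (Fin m) (Fin m) ℂ →ₗ[ℂ] Matrix (Fin m) (Fin m) ℂ}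
    (hφ : IsCompletelyPositive φ) : (choiMatrix φ).PosSemidef := by
  rw [choiMatrix_eq_ampliation]
  exact hφ m _ (posSemidef_vecMulVec_self_star _)

end CompletelyPositive

theorem Inv2.apply_eq_of_apply_eq {n : Type*} [Fintype n] [DecidableEq n]
    {f g : Matrix n n ℂ →ₗ[ℂ] Matrix n n ℂ} (h : Inv2 f g) {X Y : Matrix n n ℂ}
    (hXY : f X = Y) : g Y = X := by
  rw [← hXY]
  exact LinearMap.congr_fun h.2 X

theorem dotProduct_mulVec_single_sub_single {ι R : Type*} [Fintype ι] [DecidableEq ι]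
    [CommRing R] [StarRing R] (M : Matrix ι ι R) (i j : ι) :
    star (Pi.single i 1 - Pi.single j 1) ⬝ᵥ (M *ᵥ (Pi.single i 1 - Pi.single j 1)) =
      M i i - M i j - M j i + M j j := by
  simp [mulVec_sub, dotProduct_sub, sub_dotProduct, star_sub]
  ring

theorem phi7_map_one : phi7 1 = 1 := by
  ext i j
  fin_cases i <;> fin_cases j <;> simp [phi7] <;> norm_num

theorem phi7_eq_conjLinear_sum :
    phi7 = (1 / 3 : ℂ) • (LinearMap.id + conjLinear !![0, 1; 1, 0] +
      conjLinear (single 0 0 1) + conjLinear (single 1 1 1)) := by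
  ext A i j
  fin_cases i <;> fin_cases j <;>
    simp [phi7, conjLinear_apply, vecMul, dotProduct, mul_apply, conjTranspose_apply,
      Fin.sum_univ_two] <;> ring

theorem isCompletelyPositive_phi7 : IsCompletelyPositive phi7 := by
  rw [phi7_eq_conjLinear_sum]
  refine IsCompletelyPositive.smul ?_ (by norm_num [Complex.le_def])
  exact ((isCompletelyPositive_id.add (isCompletelyPositive_conjLinear _)).add
    (isCompletelyPositive_conjLinear _)).add (isCompletelyPositive_conjLinear _)

theorem ker_phi7 : LinearMap.ker phi7 = ℂ ∙ !![0, 1; -1, 0] := by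
  ext A
  simp only [LinearMap.mem_ker, Submodule.mem_span_singleton]
  constructor
  · intro h
    have h00 := congr_fun₂ h 0 0
    have h11 := congr_fun₂ h 1 1
    have h01 := congr_fun₂ h 0 1
    simp [phi7] at h00 h11 h01
    have ha : A 0 0 = 0 := by linear_combination (2 * h00 - h11) / 3
    have hd : A 1 1 = 0 := by linear_combination (2 * h11 - h00) / 3
    have hc : A 1 0 = -A 0 1 := by linear_combination h01
    refine ⟨A 0 1, ?_⟩
    ext i j
    fin_cases i <;> fin_cases j <;> simp [ha, hc, hd]
  · rintro ⟨c, rfl⟩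
    ext i j
    fin_cases i <;> fin_cases j <;> simp [phi7]

theorem finrank_range_phi7 : Module.finrank ℂ (LinearMap.range phi7) = 3 := by
  have hker : Module.finrank ℂ (LinearMap.ker phi7) = 1 := by
    rw [ker_phi7]
    refine finrank_span_singleton fun h => ?_
    simpa using congr_fun₂ h 0 1
  have := LinearMap.finrank_range_add_finrank_ker phi7
  simp only [hker, Module.finrank_matrix, Fintype.card_fin, Module.finrank_self] at this
  omega

theorem resolvent_phi7_single {ψ : Matrix (Fin 2) (Fin 2) ℂ →ₗ[ℂ] Matrix (Fin 2) (Fin 2) ℂ}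
    (hψ : Inv2 (LinearMap.id + ((3 : ℝ) : ℂ) • phi7) ψ) :
    ψ (single 0 0 1) = !![3 / 8, 0; 0, -1 / 8] ∧ ψ (single 0 1 1) = !![0, 2 / 3; -1 / 3, 0] ∧
      ψ (single 1 0 1) = !![0, -1 / 3; 2 / 3, 0] ∧ ψ (single 1 1 1) = !![-1 / 8, 0; 0, 3 / 8] := by
  refine ⟨hψ.apply_eq_of_apply_eq ?_, hψ.apply_eq_of_apply_eq ?_, hψ.apply_eq_of_apply_eq ?_,
    hψ.apply_eq_of_apply_eq ?_⟩ <;>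
  · ext i j
    fin_cases i <;> fin_cases j <;> simp [phi7] <;> norm_num

theorem not_qPositive_phi7 : ¬ QPositive phi7 := by
  rintro ⟨-, hq⟩
  obtain ⟨ψ, hψ, hcp⟩ := hq 3 (by norm_num)
  obtain ⟨h00, h01, h10, h11⟩ := resolvent_phi7_single hψ
  have hform := hcp.posSemidef_choiMatrix.dotProduct_mulVec_nonneg
    (Pi.single (0, 1) 1 - Pi.single (1, 0) 1)
  rw [dotProduct_mulVec_single_sub_single] at hform
  norm_num [choiMatrix, h00, h01, h10, h11, phi7, Complex.le_def] at hform

/-- `phi7` is unital, completely positive, of rank 3, but not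
q-positive. -/
theorem stmt_7 :
    phi7 1 = 1 ∧ IsCompletelyPositive phi7 ∧
      Module.finrank ℂ (LinearMap.range phi7) = 3 ∧ ¬ QPositive phi7 :=
  ⟨phi7_map_one, isCompletelyPositive_phi7, finrank_range_phi7, not_qPositive_phi7⟩
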